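/- arXiv:1312.4257 — 2 statements merged into one kernel-verified Lean document; each statement's English description precedes it below -/
import Mathlib

section
/- Let M be a monoidal category with unit object 1, let π : 1 → e be a closed idempotent arrow (i.e. both π ⊗ id_e : 1 ⊗ e → e ⊗ e and id_e ⊗ π : e ⊗ 1 → e ⊗ e are isomorphisms), and let φ : e → f be any morphism in M. Then the composite π' = φ ∘ π : 1 → f is a closed idempotent arrow in M if and only if φ : e → f is a closed idempotent arrow in the monoidal category eMe (whose tensor is the restriction of ⊗ and whose unit is e). -/
/-!
Both `π ▷ -` and `- ◁ π` are components of natural transformations, so the objects at which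
they are invertible are closed under isomorphism; by the associator they are also closed under
tensoring with anything on the far side. Hence `π ▷ f` and `f ◁ π` are invertible for
`f ≅ e ⊗ X ⊗ e`, and since `(π ≫ φ) ▷ f = π ▷ f ≫ φ ▷ f` (and likewise on the left), one
composite is invertible exactly when its second factor is.
-/

open CategoryTheory MonoidalCategory

namespace CategoryTheory.MonoidalCategory

variable {C : Type*} [Category C] [MonoidalCategory C] {A B : C} (π : A ⟶ B)

lemma isIso_whiskerRight_iff_of_iso {X Y : C} (i : X ≅ Y) :
    IsIso (π ▷ X) ↔ IsIso (π ▷ Y) :=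
  NatTrans.isIso_app_iff_of_iso ((tensoringLeft C).map π) i

lemma isIso_whiskerLeft_iff_of_iso {X Y : C} (i : X ≅ Y) :
    IsIso (X ◁ π) ↔ IsIso (Y ◁ π) :=
  NatTrans.isIso_app_iff_of_iso ((tensoringRight C).map π) i

lemma isIso_whiskerRight_tensor {X : C} [IsIso (π ▷ X)] (Y : C) : IsIso (π ▷ (X ⊗ Y)) := by
  rw [whiskerRight_tensor]
  infer_instance

lemma isIso_tensor_whiskerLeft {X : C} [IsIso (X ◁ π)] (Y : C) : IsIso ((Y ⊗ X) ◁ π) := by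
  rw [tensor_whiskerLeft]
  infer_instance

lemma isIso_comp_whiskerRight_iff {D : C} (φ : B ⟶ D) (X : C) [IsIso (π ▷ X)] :
    IsIso ((π ≫ φ) ▷ X) ↔ IsIso (φ ▷ X) := by
  rw [comp_whiskerRight, isIso_comp_left_iff]

lemma isIso_whiskerLeft_comp_iff {D : C} (φ : B ⟶ D) (X : C) [IsIso (X ◁ π)] :
    IsIso (X ◁ (π ≫ φ)) ↔ IsIso (X ◁ φ) := by
  rw [whiskerLeft_comp, isIso_comp_left_iff]

end CategoryTheory.MonoidalCategory

/-- Lemma 1.11 (closed idempotent arrows in the Hecke subcategory `eMe`):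
if `π : 𝟙 ⟶ e` is a closed idempotent arrow and `φ : e ⟶ f` is any morphism with
`f` an object of `eMe` (i.e. `f ≅ e ⊗ X ⊗ e`), then `π ≫ φ : 𝟙 ⟶ f` is a closed
idempotent arrow in `M` iff `φ` is a closed idempotent arrow in the monoidal category
`eMe` (whose tensor is the restriction of `⊗` and whose unit is `e`). -/
theorem stmt0 {C : Type*} [Category C] [MonoidalCategory C]
    (e f : C) (π : 𝟙_ C ⟶ e)
    (hπ1 : IsIso (π ▷ e)) (hπ2 : IsIso (e ◁ π))
    (X : C) (hf : f ≅ e ⊗ X ⊗ e) (φ : e ⟶ f) :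
    (IsIso ((π ≫ φ) ▷ f) ∧ IsIso (f ◁ (π ≫ φ))) ↔
      (IsIso (φ ▷ f) ∧ IsIso (f ◁ φ)) := by
  have : IsIso (π ▷ f) :=
    (isIso_whiskerRight_iff_of_iso π hf).2 (isIso_whiskerRight_tensor π (X ⊗ e))
  have : IsIso ((X ⊗ e) ◁ π) := isIso_tensor_whiskerLeft π X
  have : IsIso (f ◁ π) :=
    (isIso_whiskerLeft_iff_of_iso π hf).2 (isIso_tensor_whiskerLeft π e)
  rw [isIso_comp_whiskerRight_iff, isIso_whiskerLeft_comp_iff]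
end

section
/- Let M be a triangulated monoidal category (the tensor product is bitriangulated) and let e →^π 1 →^{π'} e' → e[1] be a distinguished triangle. Then π is an open idempotent arrow if and only if π' is a closed idempotent arrow, and in either case e ⊗ e' = 0 = e' ⊗ e. -/
open CategoryTheory Category Limits Pretriangulated MonoidalCategory

/-!
Tensoring the triangle `e ⟶ 𝟙 ⟶ e' ⟶ e⟦1⟧` on either side by `e` or by `e'` gives distinguished
triangles, and in a distinguished triangle the first (resp. second) arrow is an isomorphism iff
the third (resp. first) object vanishes. Hence `e ◁ π` and `π' ▷ e'` are isomorphisms iff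
`e ⊗ e' = 0`, while `π ▷ e` and `e' ◁ π'` are isomorphisms iff `e' ⊗ e = 0`.
-/

namespace CategoryTheory.Pretriangulated

variable {C : Type*} [Category C] [MonoidalCategory C] [Preadditive C] [HasZeroObject C]
  [HasShift C ℤ] [∀ n : ℤ, (shiftFunctor C n).Additive] [Pretriangulated C]
  {T : Triangle C} (hT : T ∈ distTriang C)
include hT

section Left

variable (X : C) [(tensorLeft X).CommShift ℤ] [(tensorLeft X).IsTriangulated]

lemma isIso_whiskerLeft_mor₁_iff : IsIso (X ◁ T.mor₁) ↔ IsZero (X ⊗ T.obj₃) :=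
  (Triangle.isZero₃_iff_isIso₁ _ ((tensorLeft X).map_distinguished _ hT)).symm

lemma isIso_whiskerLeft_mor₂_iff : IsIso (X ◁ T.mor₂) ↔ IsZero (X ⊗ T.obj₁) :=
  (Triangle.isZero₁_iff_isIso₂ _ ((tensorLeft X).map_distinguished _ hT)).symm

end Left

section Right

variable (X : C) [(tensorRight X).CommShift ℤ] [(tensorRight X).IsTriangulated]

lemma isIso_whiskerRight_mor₁_iff : IsIso (T.mor₁ ▷ X) ↔ IsZero (T.obj₃ ⊗ X) :=
  (Triangle.isZero₃_iff_isIso₁ _ ((tensorRight X).map_distinguished _ hT)).symm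

lemma isIso_whiskerRight_mor₂_iff : IsIso (T.mor₂ ▷ X) ↔ IsZero (T.obj₁ ⊗ X) :=
  (Triangle.isZero₁_iff_isIso₂ _ ((tensorRight X).map_distinguished _ hT)).symm

end Right

end CategoryTheory.Pretriangulated

/-- In a triangulated monoidal category (tensor product exact in each variable),
given a distinguished triangle `e ⟶ 𝟙 ⟶ e' ⟶ e[1]`, the arrow `π : e ⟶ 𝟙` is an
open idempotent arrow iff `π' : 𝟙 ⟶ e'` is a closed idempotent arrow, and in either
case `e ⊗ e' = 0 = e' ⊗ e`. -/
theorem stmt1 {C : Type*} [Category C] [MonoidalCategory C] [Preadditive C]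
    [HasZeroObject C] [HasShift C ℤ] [∀ n : ℤ, (shiftFunctor C n).Additive]
    [Pretriangulated C]
    [∀ X : C, (tensorLeft X).CommShift ℤ] [∀ X : C, (tensorRight X).CommShift ℤ]
    [∀ X : C, (tensorLeft X).IsTriangulated] [∀ X : C, (tensorRight X).IsTriangulated]
    (e e' : C) (π : e ⟶ 𝟙_ C) (π' : 𝟙_ C ⟶ e') (δ : e' ⟶ e⟦(1 : ℤ)⟧)
    (hdist : Triangle.mk π π' δ ∈ distTriang C) :
    ((IsIso (π ▷ e) ∧ IsIso (e ◁ π)) ↔ (IsIso (π' ▷ e') ∧ IsIso (e' ◁ π'))) ∧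
      (((IsIso (π ▷ e) ∧ IsIso (e ◁ π)) ∨ (IsIso (π' ▷ e') ∧ IsIso (e' ◁ π'))) →
        IsZero (e ⊗ e') ∧ IsZero (e' ⊗ e)) := by
  have hπe : IsIso (π ▷ e) ↔ IsZero (e' ⊗ e) := isIso_whiskerRight_mor₁_iff hdist e
  have heπ : IsIso (e ◁ π) ↔ IsZero (e ⊗ e') := isIso_whiskerLeft_mor₁_iff hdist e
  have hπ'e' : IsIso (π' ▷ e') ↔ IsZero (e ⊗ e') := isIso_whiskerRight_mor₂_iff hdist e'
  have he'π' : IsIso (e' ◁ π') ↔ IsZero (e' ⊗ e) := isIso_whiskerLeft_mor₂_iff hdist e'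
  rw [hπe, heπ, hπ'e', he'π']
  exact ⟨and_comm, by tauto⟩
end
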